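/- Let r > 0, X be a sequentially complete Hausdorff locally convex space, (T(t))_{t≥0} a strongly continuous locally equicontinuous semigroup on X with generator (A, D(A)), f ∈ C([0,r];X) and x ∈ X. If the abstract Cauchy problem u'(t) = Au(t) + f(t) on [0,r], u(0) = x, has a strict solution u, then x ∈ D(A), Au ∈ C([0,r];X), the strict solution is unique, and u(t) = T(t)x + ∫_0^t T(t−s) f(s) ds for all t ∈ [0,r]. -/

import Mathlib

open Filter Topology Set Classical
open scoped ENNReal

/-- A partition `a = d₀ < d₁ < ⋯ < dₙ = b` of the interval `[a,b]`. -/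
structure IntervalPartition (a b : ℝ) where
  n : ℕ
  points : ℕ → ℝ
  first_eq : points 0 = a
  last_eq : points n = b
  increasing : ∀ i, i < n → points i < points (i + 1)

section Defs

variable {X Y U : Type*}
variable [AddCommGroup X] [Module ℝ X] [UniformSpace X] [IsUniformAddGroup X] [ContinuousSMul ℝ X]
variable [AddCommGroup Y] [Module ℝ Y] [UniformSpace Y] [IsUniformAddGroup Y] [ContinuousSMul ℝ Y]
variable [AddCommGroup U] [Module ℝ U] [UniformSpace U] [IsUniformAddGroup U] [ContinuousSMul ℝ U]

/-- The semivariation `SV_{q,p}(α)` of `α : [a,b] → L(X;Y)` (value in `ℝ≥0∞`). -/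
noncomputable def SV (α : ℝ → X →L[ℝ] Y) (q : Seminorm ℝ Y) (p : Seminorm ℝ X)
    (a b : ℝ) : ℝ≥0∞ :=
  ⨆ (d : IntervalPartition a b) (x : ℕ → X) (_ : ∀ i, i < d.n → p (x i) ≤ 1),
    ENNReal.ofReal
      (q (∑ i ∈ Finset.range d.n,
        (α (d.points (i + 1)) (x i) - α (d.points i) (x i))))

/-- `α : [a,b] → L(X;Y)` is of bounded semivariation. -/
def BoundedSemivariation (α : ℝ → X →L[ℝ] Y) (a b : ℝ) : Prop :=
  ∀ q : Seminorm ℝ Y, Continuous ⇑q →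
    ∃ p : Seminorm ℝ X, Continuous ⇑p ∧ SV α q p a b < ⊤

/-- `y` is the Riemann–Stieltjes integral `∫_a^b f dα`. -/
def IsRSIntegral (α : ℝ → X →L[ℝ] Y) (f : ℝ → X) (a b : ℝ) (y : Y) : Prop :=
  ∀ q : Seminorm ℝ Y, Continuous ⇑q → ∀ ε : ℝ, 0 < ε → ∃ δ : ℝ, 0 < δ ∧
    ∀ (d : IntervalPartition a b) (c : ℕ → ℝ),
      (∀ i, i < d.n → d.points (i + 1) - d.points i < δ) →
      (∀ i, i < d.n → c i ∈ Set.Icc (d.points i) (d.points (i + 1))) →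
      q ((∑ i ∈ Finset.range d.n,
        (α (d.points (i + 1)) (f (c i)) - α (d.points i) (f (c i)))) - y) < ε

/-- The Riemann–Stieltjes integral `∫_a^b f dα` (junk value `0` if it does not exist). -/
noncomputable def RSIntegral (α : ℝ → X →L[ℝ] Y) (f : ℝ → X) (a b : ℝ) : Y :=
  if h : ∃ y, IsRSIntegral α f a b y then h.choose else 0

/-- `y` is the Riemann integral `∫_a^b f(s) ds`. -/
def IsRiemannIntegral (f : ℝ → X) (a b : ℝ) (y : X) : Prop :=
  ∀ q : Seminorm ℝ X, Continuous ⇑q → ∀ ε : ℝ, 0 < ε → ∃ δ : ℝ, 0 < δ ∧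
    ∀ (d : IntervalPartition a b) (c : ℕ → ℝ),
      (∀ i, i < d.n → d.points (i + 1) - d.points i < δ) →
      (∀ i, i < d.n → c i ∈ Set.Icc (d.points i) (d.points (i + 1))) →
      q ((∑ i ∈ Finset.range d.n, (d.points (i + 1) - d.points i) • f (c i)) - y) < ε

/-- The Riemann integral `∫_a^b f(s) ds` (junk value `0` if it does not exist). -/
noncomputable def riemannIntegral (f : ℝ → X) (a b : ℝ) : X :=
  if h : ∃ y, IsRiemannIntegral f a b y then h.choose else 0

/-- Sequential completeness: every Cauchy sequence converges. -/
def SequentiallyComplete (Z : Type*) [UniformSpace Z] : Prop :=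
  ∀ u : ℕ → Z, CauchySeq u → ∃ z, Filter.Tendsto u Filter.atTop (𝓝 z)

/-- A strongly continuous, locally equicontinuous semigroup. -/
def IsSCLESemigroup (T : ℝ → X →L[ℝ] X) : Prop :=
  T 0 = ContinuousLinearMap.id ℝ X ∧
  (∀ s t : ℝ, 0 ≤ s → 0 ≤ t → T (s + t) = (T s).comp (T t)) ∧
  (∀ x : X, ContinuousOn (fun t => T t x) (Set.Ici (0:ℝ))) ∧
  (∀ q : Seminorm ℝ X, Continuous ⇑q → ∀ t₀ : ℝ, 0 ≤ t₀ →
    ∃ p : Seminorm ℝ X, Continuous ⇑p ∧ ∃ C : ℝ, 0 ≤ C ∧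
      ∀ t ∈ Set.Icc (0:ℝ) t₀, ∀ x : X, q (T t x) ≤ C * p x)

/-- A strongly continuous, quasi-equicontinuous semigroup. -/
def IsSCQESemigroup (T : ℝ → X →L[ℝ] X) : Prop :=
  T 0 = ContinuousLinearMap.id ℝ X ∧
  (∀ s t : ℝ, 0 ≤ s → 0 ≤ t → T (s + t) = (T s).comp (T t)) ∧
  (∀ x : X, ContinuousOn (fun t => T t x) (Set.Ici (0:ℝ))) ∧
  (∃ ω : ℝ, ∀ q : Seminorm ℝ X, Continuous ⇑q →
    ∃ p : Seminorm ℝ X, Continuous ⇑p ∧ ∃ C : ℝ, 0 ≤ C ∧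
      ∀ t : ℝ, 0 ≤ t → ∀ x : X, q (Real.exp (-ω * t) • T t x) ≤ C * p x)

/-- The domain of the generator of a semigroup. -/
def genDomain (T : ℝ → X →L[ℝ] X) : Set X :=
  {x | ∃ y : X, Filter.Tendsto (fun t : ℝ => t⁻¹ • (T t x - x)) (𝓝[>] (0:ℝ)) (𝓝 y)}

/-- The generator of a semigroup (junk value `0` outside of its domain). -/
noncomputable def generator (T : ℝ → X →L[ℝ] X) (x : X) : X :=
  if h : ∃ y : X, Filter.Tendsto (fun t : ℝ => t⁻¹ • (T t x - x)) (𝓝[>] (0:ℝ)) (𝓝 y)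
  then h.choose else 0

/-- The convolution `(T∗f)(t) = ∫_0^t T(t-s) f(s) ds`. -/
noncomputable def sgConv (T : ℝ → X →L[ℝ] X) (f : ℝ → X) (t : ℝ) : X :=
  riemannIntegral (fun s => T (t - s) (f s)) 0 t

/-- `v` is the derivative of `u` at `t` within the set `s` (limit of difference quotients). -/
def HasDerivWithinSetLC (u : ℝ → X) (v : X) (s : Set ℝ) (t : ℝ) : Prop :=
  Filter.Tendsto (fun h : ℝ => h⁻¹ • (u (t + h) - u t))
    (𝓝[{h : ℝ | h ≠ 0 ∧ t + h ∈ s}] (0:ℝ)) (𝓝 v)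

/-- `u` is continuously differentiable on `s` with derivative `u'`. -/
def IsC1On (u u' : ℝ → X) (s : Set ℝ) : Prop :=
  ContinuousOn u s ∧ ContinuousOn u' s ∧ ∀ t ∈ s, HasDerivWithinSetLC u (u' t) s t

/-- `u` is a strict solution of `u' = Au + g` on `[0,r]`, `u(0) = x`. -/
def IsStrictSolution (T : ℝ → X →L[ℝ] X) (g : ℝ → X) (x : X) (r : ℝ) (u : ℝ → X) : Prop :=
  u 0 = x ∧ (∀ t ∈ Set.Icc (0:ℝ) r, u t ∈ genDomain T) ∧
  ∃ u' : ℝ → X, IsC1On u u' (Set.Icc (0:ℝ) r) ∧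
    ∀ t ∈ Set.Icc (0:ℝ) r, u' t = generator T (u t) + g t

/-- `(T(t))` satisfies C-maximal regularity for `(B,r)`. -/
def CMaxReg (T : ℝ → X →L[ℝ] X) (B : U →L[ℝ] X) (r : ℝ) : Prop :=
  ∀ f : ℝ → U, ContinuousOn f (Set.Icc (0:ℝ) r) →
    (∀ t ∈ Set.Icc (0:ℝ) r, sgConv T (fun s => B (f s)) t ∈ genDomain T) ∧
    ContinuousOn (fun t => generator T (sgConv T (fun s => B (f s)) t)) (Set.Icc (0:ℝ) r)

end Defs

/-!
For fixed `t`, the function `s ↦ T(t-s) u(s)` is differentiable on `[0,t]` with derivative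
`T(t-s)(u'(s) - A u(s)) = T(t-s) f(s)`; local equicontinuity makes `(τ, y) ↦ T(τ) y` jointly
continuous, which is what the product rule needs. A mean value inequality, proved seminorm by
seminorm from the real fencing theorem, shows that the Riemann sums of `T(t-·) f(·)` converge
to `T(t-t) u(t) - T(t) u(0) = u(t) - T(t) x`. The formula determines `u`, and `A u = u' - f`.
-/

open scoped Uniformity

lemma Continuous.tendsto_nhdsWithin_of_eq {α β : Type*} [TopologicalSpace α]
    [TopologicalSpace β] {f : α → β} (hf : Continuous f) {s : Set α} {t : Set β} {x : α}
    {y : β} (hy : f x = y) (hst : MapsTo f s t) : Tendsto f (𝓝[s] x) (𝓝[t] y) :=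
  hy ▸ hf.continuousWithinAt.tendsto_nhdsWithin hst

namespace IntervalPartition

variable {a b : ℝ}

lemma points_mono (d : IntervalPartition a b) {i j : ℕ} (hij : i ≤ j) (hj : j ≤ d.n) :
    d.points i ≤ d.points j := by
  induction j, hij using Nat.le_induction with
  | base => exact le_rfl
  | succ k _ ih => exact (ih (by omega)).trans (d.increasing k (by omega)).le

lemma points_mem_Icc (d : IntervalPartition a b) {i : ℕ} (hi : i ≤ d.n) :
    d.points i ∈ Icc a b :=
  ⟨d.first_eq.symm.trans_le (d.points_mono (Nat.zero_le i) hi),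
    (d.points_mono hi le_rfl).trans_eq d.last_eq⟩

lemma sum_range_sub {M : Type*} [AddCommGroup M] (d : IntervalPartition a b) (F : ℝ → M) :
    ∑ i ∈ Finset.range d.n, (F (d.points (i + 1)) - F (d.points i)) = F b - F a := by
  rw [Finset.sum_range_sub (fun i => F (d.points i)), d.last_eq, d.first_eq]

noncomputable def uniform (hab : a < b) (n : ℕ) (hn : 0 < n) : IntervalPartition a b where
  n := n
  points i := a + i * ((b - a) / n)
  first_eq := by simp
  last_eq := by rw [mul_div_cancel₀ _ (Nat.cast_ne_zero.2 hn.ne')]; ring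
  increasing i _ := by
    have : 0 < (b - a) / n := div_pos (sub_pos.2 hab) (Nat.cast_pos.2 hn)
    push_cast
    linarith

lemma uniform_mesh (hab : a < b) {n : ℕ} (hn : 0 < n) (i : ℕ) :
    (uniform hab n hn).points (i + 1) - (uniform hab n hn).points i = (b - a) / n := by
  simp only [uniform]
  push_cast
  ring

lemma exists_mesh_lt (hab : a ≤ b) {δ : ℝ} (hδ : 0 < δ) :
    ∃ d : IntervalPartition a b, ∀ i < d.n, d.points (i + 1) - d.points i < δ := by
  rcases hab.eq_or_lt with rfl | hab
  · exact ⟨⟨0, fun _ => a, rfl, rfl, fun i hi => absurd hi i.not_lt_zero⟩,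
      fun i hi => absurd hi i.not_lt_zero⟩
  obtain ⟨n, hn⟩ := exists_nat_gt ((b - a) / δ)
  have hn0 : 0 < n := by exact_mod_cast (div_pos (sub_pos.2 hab) hδ).trans hn
  refine ⟨uniform hab n hn0, fun i hi => ?_⟩
  rw [uniform_mesh hab hn0 i, div_lt_iff₀ (Nat.cast_pos.2 hn0), mul_comm]
  rwa [div_lt_iff₀ hδ] at hn

end IntervalPartition

section LocallyConvex

variable {X : Type*} [AddCommGroup X] [Module ℝ X] [UniformSpace X] [IsUniformAddGroup X]

lemma ContinuousOn.exists_seminorm_sub_lt {g : ℝ → X} {a b : ℝ}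
    (hg : ContinuousOn g (Icc a b)) {q : Seminorm ℝ X} (hq : Continuous ⇑q) {ε : ℝ}
    (hε : 0 < ε) : ∃ δ > 0, ∀ s ∈ Icc a b, ∀ s' ∈ Icc a b, |s - s'| < δ →
      q (g s - g s') < ε := by
  have hU : {z : X × X | q (z.2 - z.1) < ε} ∈ 𝓤 X := by
    rw [uniformity_eq_comap_nhds_zero X]
    exact ⟨_, (isOpen_lt hq continuous_const).mem_nhds (by simpa using hε), fun _ hz => hz⟩
  obtain ⟨δ, hδ, H⟩ := (Metric.uniformity_basis_dist.inf_principal _).mem_iff.1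
    ((isCompact_Icc.uniformContinuousOn_of_continuous hg) hU)
  exact ⟨δ, hδ, fun s hs s' hs' hss =>
    @H (s', s) ⟨show dist s' s < δ by rwa [Real.dist_eq, abs_sub_comm], hs', hs⟩⟩

variable [ContinuousSMul ℝ X] [LocallyConvexSpace ℝ X]

lemma tendsto_nhds_iff_seminorm {α : Type*} {F : α → X} {l : Filter α} {y : X} :
    Tendsto F l (𝓝 y) ↔
      ∀ q : Seminorm ℝ X, Continuous ⇑q → Tendsto (fun a => q (F a - y)) l (𝓝 0) := by
  refine ⟨fun h q hq => ?_, fun h => ?_⟩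
  · simpa [Function.comp_def] using (hq.tendsto 0).comp (by simpa using h.sub_const y)
  · rw [(with_gaugeSeminormFamily (𝕜 := ℝ)).tendsto_nhds]
    exact fun i ε hε =>
      (h _ (with_gaugeSeminormFamily.continuous_seminorm i)).eventually (eventually_lt_nhds hε)

lemma eq_of_forall_seminorm_sub_lt [T2Space X] {y z : X}
    (h : ∀ q : Seminorm ℝ X, Continuous ⇑q → ∀ ε : ℝ, 0 < ε → q (y - z) < ε) : y = z := by
  by_contra hyz
  obtain ⟨i, hi⟩ := (with_gaugeSeminormFamily (𝕜 := ℝ) (E := X)).separating_of_T1 (y - z)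
    (sub_ne_zero.2 hyz)
  exact (h _ (with_gaugeSeminormFamily.continuous_seminorm i) _
    ((apply_nonneg _ _).lt_of_ne' hi)).false

lemma IsRiemannIntegral.unique [T2Space X] {g : ℝ → X} {a b : ℝ} (hab : a ≤ b) {y₁ y₂ : X}
    (h₁ : IsRiemannIntegral g a b y₁) (h₂ : IsRiemannIntegral g a b y₂) : y₁ = y₂ := by
  refine eq_of_forall_seminorm_sub_lt fun q hq ε hε => ?_
  obtain ⟨δ₁, hδ₁, H₁⟩ := h₁ q hq (ε / 2) (half_pos hε)
  obtain ⟨δ₂, hδ₂, H₂⟩ := h₂ q hq (ε / 2) (half_pos hε)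
  obtain ⟨d, hd⟩ := IntervalPartition.exists_mesh_lt hab (lt_min hδ₁ hδ₂)
  have hc : ∀ i < d.n, d.points i ∈ Icc (d.points i) (d.points (i + 1)) :=
    fun i hi => ⟨le_rfl, (d.increasing i hi).le⟩
  have e₁ := H₁ d d.points (fun i hi => (hd i hi).trans_le (min_le_left _ _)) hc
  have e₂ := H₂ d d.points (fun i hi => (hd i hi).trans_le (min_le_right _ _)) hc
  set S := ∑ i ∈ Finset.range d.n, (d.points (i + 1) - d.points i) • g (d.points i)
  calc q (y₁ - y₂) = q ((S - y₂) - (S - y₁)) := by congr 1; abel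
    _ ≤ q (S - y₂) + q (S - y₁) := map_sub_le_add q _ _
    _ < ε := by linarith

lemma riemannIntegral_eq [T2Space X] {g : ℝ → X} {a b : ℝ} (hab : a ≤ b) {y : X}
    (h : IsRiemannIntegral g a b y) : riemannIntegral g a b = y := by
  have hex : ∃ z, IsRiemannIntegral g a b z := ⟨y, h⟩
  rw [riemannIntegral, dif_pos hex]
  exact hex.choose_spec.unique hab h

end LocallyConvex

section MeanValue

variable {X : Type*} [AddCommGroup X] [Module ℝ X] [UniformSpace X]

lemma HasDerivWithinSetLC.mono {u : ℝ → X} {v : X} {s s' : Set ℝ} {t : ℝ}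
    (h : HasDerivWithinSetLC u v s t) (hs : s' ⊆ s) : HasDerivWithinSetLC u v s' t :=
  h.mono_left (nhdsWithin_mono _ fun _ hh => ⟨hh.1, hs hh.2⟩)

lemma HasDerivWithinSetLC.tendsto_slope_nhdsGT {u : ℝ → X} {v : X} {s : Set ℝ} {σ b : ℝ}
    (h : HasDerivWithinSetLC u v s σ) (hσb : σ < b) (hs : Ioo σ b ⊆ s) :
    Tendsto (fun z => (z - σ)⁻¹ • (u z - u σ)) (𝓝[>] σ) (𝓝 v) := by
  have hshift : Tendsto (fun z => z - σ) (𝓝[>] σ) (𝓝[{h | h ≠ 0 ∧ σ + h ∈ s}] 0) := by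
    refine tendsto_nhdsWithin_iff.2 ⟨?_, ?_⟩
    · simpa using (tendsto_id.sub_const σ).mono_left (nhdsWithin_le_nhds (a := σ))
    · filter_upwards [Ioo_mem_nhdsGT hσb] with z hz
      exact ⟨sub_ne_zero.2 hz.1.ne', by simpa using hs hz⟩
  simpa [Function.comp_def] using h.comp hshift

variable [IsUniformAddGroup X]

lemma HasDerivWithinSetLC.sub_smul_const {u : ℝ → X} {v : X} {s : Set ℝ} {t : ℝ}
    (h : HasDerivWithinSetLC u v s t) (w : X) :
    HasDerivWithinSetLC (fun σ => u σ - σ • w) (v - w) s t := by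
  refine (h.sub_const w).congr' (eventually_nhdsWithin_of_forall fun k hk => ?_)
  change k⁻¹ • (u (t + k) - u t) - w = k⁻¹ • (u (t + k) - (t + k) • w - (u t - t • w))
  rw [show u (t + k) - (t + k) • w - (u t - t • w) = (u (t + k) - u t) - k • w by module,
    smul_sub _ _ (k • w), smul_smul, inv_mul_cancel₀ hk.1, one_smul]

lemma seminorm_sub_le_of_hasDerivWithinSetLC {G Ψ : ℝ → X} {s : Set ℝ} {a b M : ℝ}
    {q : Seminorm ℝ X} (hq : Continuous ⇑q) (hab : a ≤ b) (hs : Icc a b ⊆ s)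
    (hG : ContinuousOn G (Icc a b)) (hd : ∀ σ ∈ Ico a b, HasDerivWithinSetLC G (Ψ σ) s σ)
    (hM : ∀ σ ∈ Ico a b, q (Ψ σ) ≤ M) : q (G b - G a) ≤ M * (b - a) := by
  refine image_le_of_liminf_slope_right_le_deriv_boundary (f := fun σ => q (G σ - G a))
    (B := fun σ => M * (σ - a)) (B' := fun _ => M)
    (hq.comp_continuousOn (hG.sub continuousOn_const)) (by simp) (by fun_prop)
    (fun σ _ => by simpa using ((hasDerivWithinAt_id σ _).sub_const a).const_mul M)
    (fun σ hσ r hr => ?_) ⟨hab, le_rfl⟩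
  have hslope := (hq.tendsto _).comp
    ((hd σ hσ).tendsto_slope_nhdsGT hσ.2 fun z hz => hs ⟨hσ.1.trans hz.1.le, hz.2.le⟩)
  refine Eventually.frequently ?_
  filter_upwards [hslope.eventually (gt_mem_nhds ((hM σ hσ).trans_lt hr)),
    self_mem_nhdsWithin] with z hz (hzσ : σ < z)
  have hsub : q (G z - G a) ≤ q (G z - G σ) + q (G σ - G a) := by
    simpa using map_add_le_add q (G z - G σ) (G σ - G a)
  calc slope (fun σ => q (G σ - G a)) σ z = (q (G z - G a) - q (G σ - G a)) / (z - σ) :=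
        slope_def_field _ _ _
    _ ≤ q (G z - G σ) / (z - σ) :=
        div_le_div_of_nonneg_right (by linarith) (sub_pos.2 hzσ).le
    _ = q ((z - σ)⁻¹ • (G z - G σ)) := by
        rw [map_smul_eq_mul, Real.norm_eq_abs, abs_inv, abs_of_pos (sub_pos.2 hzσ),
          inv_mul_eq_div]
    _ < r := hz

variable [ContinuousSMul ℝ X]

lemma seminorm_sub_sub_smul_le {g Φ : ℝ → X} {s : Set ℝ} {a b c M : ℝ}
    {q : Seminorm ℝ X} (hq : Continuous ⇑q) (hab : a ≤ b) (hs : Icc a b ⊆ s)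
    (hg : ContinuousOn g (Icc a b)) (hd : ∀ σ ∈ Ico a b, HasDerivWithinSetLC g (Φ σ) s σ)
    (hM : ∀ σ ∈ Ico a b, q (Φ σ - Φ c) ≤ M) :
    q (g b - g a - (b - a) • Φ c) ≤ M * (b - a) := by
  have h := seminorm_sub_le_of_hasDerivWithinSetLC (G := fun σ => g σ - σ • Φ c) hq hab hs
    (hg.sub (continuousOn_id.smul continuousOn_const))
    (fun σ hσ => (hd σ hσ).sub_smul_const (Φ c)) hM
  rwa [show g b - b • Φ c - (g a - a • Φ c) = g b - g a - (b - a) • Φ c by module] at h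

theorem isRiemannIntegral_of_hasDerivWithinSetLC {g Φ : ℝ → X} {a b : ℝ} (hab : a ≤ b)
    (hg : ContinuousOn g (Icc a b)) (hΦ : ContinuousOn Φ (Icc a b))
    (hd : ∀ σ ∈ Icc a b, HasDerivWithinSetLC g (Φ σ) (Icc a b) σ) :
    IsRiemannIntegral Φ a b (g b - g a) := by
  intro q hq ε hε
  set η := ε / (b - a + 1)
  obtain ⟨δ, hδ, hΦδ⟩ := hΦ.exists_seminorm_sub_lt hq (show 0 < η by positivity)
  refine ⟨δ, hδ, fun d c hmesh hc => ?_⟩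
  set Δ := fun i => d.points (i + 1) - d.points i
  have hstep : ∀ i < d.n,
      q (Δ i • Φ (c i) - (g (d.points (i + 1)) - g (d.points i))) ≤ η * Δ i := by
    intro i hi
    have hsub : Icc (d.points i) (d.points (i + 1)) ⊆ Icc a b :=
      Icc_subset_Icc (d.points_mem_Icc hi.le).1 (d.points_mem_Icc hi).2
    rw [← map_neg_eq_map, neg_sub]
    refine seminorm_sub_sub_smul_le hq (d.increasing i hi).le hsub (hg.mono hsub)
      (fun σ hσ => hd σ (hsub (Ico_subset_Icc_self hσ))) fun σ hσ => (hΦδ σ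
        (hsub (Ico_subset_Icc_self hσ)) (c i) (hsub (hc i hi)) ?_).le
    have := hmesh i hi
    rw [abs_lt]
    constructor <;> linarith [hσ.1, hσ.2, (hc i hi).1, (hc i hi).2]
  calc q ((∑ i ∈ Finset.range d.n, Δ i • Φ (c i)) - (g b - g a))
      = q (∑ i ∈ Finset.range d.n, (Δ i • Φ (c i) - (g (d.points (i + 1)) - g (d.points i)))) := by
        rw [Finset.sum_sub_distrib, d.sum_range_sub]
    _ ≤ ∑ i ∈ Finset.range d.n, q (Δ i • Φ (c i) - (g (d.points (i + 1)) - g (d.points i))) :=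
        Finset.le_sum_of_subadditive q (map_zero q).le (map_add_le_add q) _ _
    _ ≤ ∑ i ∈ Finset.range d.n, η * Δ i :=
        Finset.sum_le_sum fun i hi => hstep i (Finset.mem_range.1 hi)
    _ = η * (b - a) := by rw [← Finset.mul_sum]; exact congrArg _ (d.sum_range_sub id)
    _ < ε := by
        rw [div_mul_eq_mul_div, div_lt_iff₀ (by linarith)]
        nlinarith

end MeanValue

lemma tendsto_generator {X : Type*} [AddCommGroup X] [Module ℝ X] [UniformSpace X]
    {T : ℝ → X →L[ℝ] X} {x : X} (hx : x ∈ genDomain T) :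
    Tendsto (fun h : ℝ => h⁻¹ • (T h x - x)) (𝓝[>] 0) (𝓝 (generator T x)) := by
  have hx' : ∃ y, Tendsto (fun h : ℝ => h⁻¹ • (T h x - x)) (𝓝[>] 0) (𝓝 y) := hx
  rw [generator, dif_pos hx']
  exact hx'.choose_spec

namespace IsSCLESemigroup

variable {X : Type*} [AddCommGroup X] [Module ℝ X] [UniformSpace X] {T : ℝ → X →L[ℝ] X}

lemma apply_add (hT : IsSCLESemigroup T) {s t : ℝ} (hs : 0 ≤ s) (ht : 0 ≤ t) (x : X) :
    T (s + t) x = T s (T t x) := by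
  rw [hT.2.1 s t hs ht, ContinuousLinearMap.comp_apply]

variable [IsUniformAddGroup X] [ContinuousSMul ℝ X] [LocallyConvexSpace ℝ X]

lemma tendsto_apply (hT : IsSCLESemigroup T) {α : Type*} {l : Filter α} {τ : α → ℝ}
    {w : α → X} {τ₀ : ℝ} {w₀ : X} (hτ₀ : 0 ≤ τ₀) (hτ : Tendsto τ l (𝓝[Ici 0] τ₀))
    (hw : Tendsto w l (𝓝 w₀)) : Tendsto (fun a => T (τ a) (w a)) l (𝓝 (T τ₀ w₀)) := by
  rw [tendsto_nhds_iff_seminorm]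
  intro q hq
  obtain ⟨p, hp, C, -, hC⟩ := hT.2.2.2 q hq (τ₀ + 1) (by linarith)
  have hτ_le : ∀ᶠ a in l, τ a ∈ Icc 0 (τ₀ + 1) := hτ <| mem_of_superset
    (inter_mem_nhdsWithin _ (Iio_mem_nhds (lt_add_one τ₀))) fun _ hs => ⟨hs.1, hs.2.le⟩
  have horbit := tendsto_nhds_iff_seminorm.1 ((hT.2.2.1 w₀ τ₀ hτ₀).tendsto.comp hτ) q hq
  have hsmall : Tendsto (fun a => C * p (w a - w₀) + q (T (τ a) w₀ - T τ₀ w₀)) l (𝓝 0) := by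
    simpa using ((tendsto_nhds_iff_seminorm.1 hw p hp).const_mul C).add horbit
  refine squeeze_zero' (.of_forall fun a => apply_nonneg q _) ?_ hsmall
  filter_upwards [hτ_le] with a ha
  calc q (T (τ a) (w a) - T τ₀ w₀) = q (T (τ a) (w a - w₀) + (T (τ a) w₀ - T τ₀ w₀)) := by
        rw [(T (τ a)).map_sub]; congr 1; abel
    _ ≤ C * p (w a - w₀) + q (T (τ a) w₀ - T τ₀ w₀) :=
        (map_add_le_add q _ _).trans (add_le_add_left (hC _ ha _) _)

lemma continuousOn_apply_sub (hT : IsSCLESemigroup T) {t : ℝ} {w : ℝ → X}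
    (hw : ContinuousOn w (Icc 0 t)) : ContinuousOn (fun s => T (t - s) (w s)) (Icc 0 t) :=
  fun s hs => hT.tendsto_apply (sub_nonneg.2 hs.2)
    ((continuous_const.sub continuous_id).tendsto_nhdsWithin_of_eq rfl
      fun _ hσ => sub_nonneg.2 hσ.2) (hw s hs)

lemma hasDerivWithinSetLC_orbit (hT : IsSCLESemigroup T) {x : X} (hx : x ∈ genDomain T)
    {τ₀ : ℝ} (hτ₀ : 0 ≤ τ₀) :
    HasDerivWithinSetLC (fun τ => T τ x) (T τ₀ (generator T x)) (Ici 0) τ₀ := by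
  have hsplit : {h : ℝ | h ≠ 0 ∧ τ₀ + h ∈ Ici 0} = Ioi 0 ∪ Ico (-τ₀) 0 := by
    ext h
    simp only [mem_ofPred_eq, mem_Ici, mem_union, mem_Ioi, mem_Ico]
    grind
  rw [HasDerivWithinSetLC, hsplit, nhdsWithin_union, tendsto_sup]
  constructor
  · refine (((T τ₀).continuous.tendsto _).comp (tendsto_generator hx)).congr'
      (eventually_nhdsWithin_of_forall fun h (hh : 0 < h) => ?_)
    simp [hT.apply_add hτ₀ hh.le]
  · have hneg : Tendsto (fun h : ℝ => -h) (𝓝[Ico (-τ₀) 0] 0) (𝓝[>] 0) :=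
      continuous_neg.tendsto_nhdsWithin_of_eq neg_zero fun _ hh => neg_pos.2 hh.2
    have hτ : Tendsto (fun h : ℝ => τ₀ + h) (𝓝[Ico (-τ₀) 0] 0) (𝓝[Ici 0] τ₀) :=
      (continuous_const.add continuous_id).tendsto_nhdsWithin_of_eq (add_zero τ₀)
        fun h hh => show 0 ≤ τ₀ + h by linarith [hh.1]
    refine (hT.tendsto_apply hτ₀ hτ ((tendsto_generator hx).comp hneg)).congr'
      (eventually_nhdsWithin_of_forall fun h hh => ?_)
    have hsemi : T τ₀ x = T (τ₀ + h) (T (-h) x) := by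
      rw [← hT.apply_add (by linarith [hh.1]) (by linarith [hh.2]), add_neg_cancel_right]
    simp only [Function.comp_apply, map_smul, map_sub, hsemi, inv_neg, neg_smul, ← smul_neg,
      neg_sub]

lemma hasDerivWithinSetLC_apply_sub (hT : IsSCLESemigroup T) {t s₀ : ℝ} {u : ℝ → X} {v : X}
    (hs₀ : s₀ ∈ Icc 0 t) (hu : HasDerivWithinSetLC u v (Icc 0 t) s₀)
    (hdom : u s₀ ∈ genDomain T) :
    HasDerivWithinSetLC (fun s => T (t - s) (u s)) (T (t - s₀) (v - generator T (u s₀)))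
      (Icc 0 t) s₀ := by
  have hτ : Tendsto (fun h => t - s₀ - h) (𝓝[{h | h ≠ 0 ∧ s₀ + h ∈ Icc 0 t}] 0)
      (𝓝[Ici 0] (t - s₀)) :=
    (continuous_const.sub continuous_id).tendsto_nhdsWithin_of_eq (sub_zero _)
      fun h hh => show 0 ≤ t - s₀ - h by linarith [hh.2.2]
  have hneg : Tendsto (fun h : ℝ => -h) (𝓝[{h | h ≠ 0 ∧ s₀ + h ∈ Icc 0 t}] 0)
      (𝓝[{k | k ≠ 0 ∧ t - s₀ + k ∈ Ici 0}] 0) :=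
    continuous_neg.tendsto_nhdsWithin_of_eq neg_zero fun h hh =>
      ⟨neg_ne_zero.2 hh.1, show 0 ≤ t - s₀ + -h by linarith [hh.2.2]⟩
  have hmove := hT.tendsto_apply (sub_nonneg.2 hs₀.2) hτ hu
  have horbit := (hT.hasDerivWithinSetLC_orbit hdom (sub_nonneg.2 hs₀.2)).comp hneg
  rw [map_sub]
  refine (hmove.sub horbit).congr' (eventually_nhdsWithin_of_forall fun h _ => ?_)
  simp only [Function.comp_apply, map_smul, map_sub, inv_neg, neg_smul]
  rw [show t - (s₀ + h) = t - s₀ - h by ring, show t - s₀ + -h = t - s₀ - h by ring]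
  module

end IsSCLESemigroup

namespace IsStrictSolution

variable {X : Type*} [AddCommGroup X] [Module ℝ X] [UniformSpace X] [IsUniformAddGroup X]
  [ContinuousSMul ℝ X] [LocallyConvexSpace ℝ X] {T : ℝ → X →L[ℝ] X} {f u : ℝ → X} {x : X}
  {r : ℝ}

lemma isRiemannIntegral (hu : IsStrictSolution T f x r u) (hT : IsSCLESemigroup T)
    (hf : ContinuousOn f (Icc 0 r)) {t : ℝ} (ht : t ∈ Icc 0 r) :
    IsRiemannIntegral (fun s => T (t - s) (f s)) 0 t (u t - T t x) := by
  obtain ⟨rfl, hdom, u', ⟨hu_cont, -, hu'⟩, hu_eq⟩ := hu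
  have hsub : Icc 0 t ⊆ Icc 0 r := Icc_subset_Icc_right ht.2
  have hFTC := isRiemannIntegral_of_hasDerivWithinSetLC ht.1
    (hT.continuousOn_apply_sub (hu_cont.mono hsub)) (hT.continuousOn_apply_sub (hf.mono hsub))
    fun s hs => by
      simpa [hu_eq s (hsub hs)] using
        hT.hasDerivWithinSetLC_apply_sub hs ((hu' s (hsub hs)).mono hsub) (hdom s (hsub hs))
  simpa [hT.1] using hFTC

lemma eq_add_sgConv [T2Space X] (hu : IsStrictSolution T f x r u) (hT : IsSCLESemigroup T)
    (hf : ContinuousOn f (Icc 0 r)) {t : ℝ} (ht : t ∈ Icc 0 r) :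
    u t = T t x + sgConv T f t := by
  rw [sgConv, riemannIntegral_eq ht.1 (hu.isRiemannIntegral hT hf ht), add_sub_cancel]

end IsStrictSolution

theorem stmt4_general {X : Type*} [AddCommGroup X] [Module ℝ X] [UniformSpace X] [IsUniformAddGroup X]
    [ContinuousSMul ℝ X] [LocallyConvexSpace ℝ X] [T2Space X]
    (r : ℝ) (hr : 0 < r)
    (T : ℝ → X →L[ℝ] X) (hT : IsSCLESemigroup T)
    (f : ℝ → X) (hf : ContinuousOn f (Set.Icc (0:ℝ) r)) (x : X)
    (u : ℝ → X) (hu : IsStrictSolution T f x r u) :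
    x ∈ genDomain T ∧
    ContinuousOn (fun t => generator T (u t)) (Set.Icc (0:ℝ) r) ∧
    (∀ v : ℝ → X, IsStrictSolution T f x r v → ∀ t ∈ Set.Icc (0:ℝ) r, v t = u t) ∧
    (∀ t ∈ Set.Icc (0:ℝ) r, u t = T t x + sgConv T f t) := by
  refine ⟨hu.1 ▸ hu.2.1 0 ⟨le_rfl, hr.le⟩, ?_, fun v hv t ht => ?_,
    fun t ht => hu.eq_add_sgConv hT hf ht⟩
  · obtain ⟨-, -, u', ⟨-, hu'_cont, -⟩, hu_eq⟩ := hu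
    exact (hu'_cont.sub hf).congr fun t ht => by simp [hu_eq t ht]
  · rw [hv.eq_add_sgConv hT hf ht, hu.eq_add_sgConv hT hf ht]

theorem stmt4 {X : Type*} [AddCommGroup X] [Module ℝ X] [UniformSpace X] [IsUniformAddGroup X]
    [ContinuousSMul ℝ X] [LocallyConvexSpace ℝ X] [T2Space X]
    (r : ℝ) (hr : 0 < r) (hX : SequentiallyComplete X)
    (T : ℝ → X →L[ℝ] X) (hT : IsSCLESemigroup T)
    (f : ℝ → X) (hf : ContinuousOn f (Set.Icc (0:ℝ) r)) (x : X)
    (u : ℝ → X) (hu : IsStrictSolution T f x r u) :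
    x ∈ genDomain T ∧
    ContinuousOn (fun t => generator T (u t)) (Set.Icc (0:ℝ) r) ∧
    (∀ v : ℝ → X, IsStrictSolution T f x r v → ∀ t ∈ Set.Icc (0:ℝ) r, v t = u t) ∧
    (∀ t ∈ Set.Icc (0:ℝ) r, u t = T t x + sgConv T f t) :=
  stmt4_general r hr T hT f hf x u hu
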